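/- Proposition 2 (soundness of abstract mutual exclusion): if every element of Θᵢ entails some element of its depth-k abstraction Θᵢᴰᴷ (i=1,2), projections preserve entailment, and conjunction of incompatible projections of abstracted constraints is false, then the concretization of the abstract mux of the depth-k abstractions is contained in the concrete mux: γ(mux^α(Θ₁ᴰᴷ, Θ₂ᴰᴷ)) ⊆ mux(Θ₁, Θ₂). -/
import Mathlib


theorem abstract_mux_sound {Con Var : Type*} [Preorder Con]
    (fls : Con) (vx : Set Var) (fix : Con → Set Var)
    (proj : Set Var → Con → Con) (conj : Con → Con → Con)
    -- projections preserve entailment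
    (hproj : ∀ (Y : Set Var) (φ φ' : Con), φ ≤ φ' → proj Y φ ≤ proj Y φ')
    -- conjunction of incompatible weakenings is false
    (hconj : ∀ f₁ f₁' f₂ f₂' : Con,
      f₁ ≤ f₁' → f₂ ≤ f₂' → conj f₁' f₂' = fls → conj f₁ f₂ = fls)
    (Θ₁ Θ₂ DK₁ DK₂ : Set Con) (hDK₁fin : DK₁.Finite) (hDK₂fin : DK₂.Finite)
    -- every element of Θᵢ entails some element of its depth-k abstraction
    (h₁ : ∀ φ ∈ Θ₁, ∃ φ' ∈ DK₁, φ ≤ φ')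
    (h₂ : ∀ φ ∈ Θ₂, ∃ φ' ∈ DK₂, φ ≤ φ') :
    -- concretization of the abstract mux
    {ψ : Con | ∃ Y : Set Var, Y ⊆ vx ∩ fix ψ ∧
        ∀ θ₁ ∈ DK₁, ∀ θ₂ ∈ DK₂, conj (proj Y θ₁) (proj Y θ₂) = fls}
    ⊆
    -- concrete mux
    {φ : Con | ∃ Y : Set Var, Y ⊆ fix φ ∧
        ∀ θ₁ ∈ Θ₁, ∀ θ₂ ∈ Θ₂, conj (proj Y θ₁) (proj Y θ₂) = fls} := by
  rintro ψ ⟨Y, hY, hmux⟩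
  refine ⟨Y, fun y hy => (hY hy).2, fun θ₁ h1 θ₂ h2 => ?_⟩
  obtain ⟨φ₁, hφ₁, hle₁⟩ := h₁ θ₁ h1
  obtain ⟨φ₂, hφ₂, hle₂⟩ := h₂ θ₂ h2
  exact hconj _ _ _ _ (hproj Y _ _ hle₁) (hproj Y _ _ hle₂) (hmux φ₁ hφ₁ φ₂ hφ₂)
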